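/- arXiv:2404.07639 — 2 statements merged into one kernel-verified Lean document; each statement's English description precedes it below -/
import Mathlib

section
/- Let R be a commutative Noetherian integral domain, n a positive integer, and M a finitely generated R[n]-module. Let t_M : M → M^{∨∨} be the canonical evaluation map into the double dual. Then the kernel of t_M equals the torsion submodule T(M) of M. -/
open Polynomial

noncomputable section

/-- The primitive multiple ring `R[n] = R[t]/(t^n)`. -/
abbrev Rn (R : Type*) [CommRing R] (n : ℕ) : Type _ :=
  Polynomial R ⧸ Ideal.span {(X : Polynomial R) ^ n}

/-- The class `t` of the variable in `R[n]`. -/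
def tn (R : Type*) [CommRing R] (n : ℕ) : Rn R n :=
  Ideal.Quotient.mk _ X

/-- `R[k] = R[n]/(t^k)` as an `R[n]`-module (for `k ≤ n` this is `R[t]/(t^k)`
with the `R[n]`-module structure coming from the natural surjection `R[n] → R[k]`). -/
abbrev Rmod (R : Type*) [CommRing R] (n k : ℕ) : Type _ :=
  Rn R n ⧸ (Ideal.span {tn R n ^ k})

/-- The constant term homomorphism `R[n] → R` (for `n > 0`). -/
def ct (R : Type*) [CommRing R] (n : ℕ) (hn : 0 < n) : Rn R n →+* R :=
  Ideal.Quotient.lift _ (evalRingHom 0) (by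
    intro a ha
    rw [Ideal.mem_span_singleton] at ha
    obtain ⟨c, rfl⟩ := ha
    simp [zero_pow hn.ne'])

section Modules

variable (R : Type*) [CommRing R] (n : ℕ) (M : Type*) [AddCommGroup M] [Module (Rn R n) M]

/-- The submodule `M_i = t^i M` of an `R[n]`-module `M`. -/
def tMi (i : ℕ) : Submodule (Rn R n) M :=
  LinearMap.range (LinearMap.lsmul (Rn R n) M (tn R n ^ i))

/-- The submodule `M^{(i)} = {m ∈ M : t^i m = 0}` of an `R[n]`-module `M`. -/
def kt (i : ℕ) : Submodule (Rn R n) M :=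
  LinearMap.ker (LinearMap.lsmul (Rn R n) M (tn R n ^ i))

/-- `G_i(M) = t^i M / t^{i+1} M`. -/
abbrev Gi (i : ℕ) :=
  (tMi R n M i) ⧸ (Submodule.comap (tMi R n M i).subtype (tMi R n M (i + 1)))

/-- `G^{(i+1)}(M) = M^{(i+1)}/M^{(i)}` (note the shift by one in the indexing:
`Gup R n M i` is `G^{(i+1)}(M)`). -/
abbrev Gup (i : ℕ) :=
  (kt R n M (i + 1)) ⧸ (Submodule.comap (kt R n M (i + 1)).subtype (kt R n M i))

lemma tMi_succ_mem {i : ℕ} {x : M} (hx : x ∈ tMi R n M i) :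
    tn R n • x ∈ tMi R n M (i + 1) := by
  obtain ⟨m, rfl⟩ := hx
  exact ⟨m, by simp [LinearMap.lsmul_apply, smul_smul, pow_succ']⟩

lemma kt_pred_mem {i : ℕ} {x : M} (hx : x ∈ kt R n M (i + 1)) :
    tn R n • x ∈ kt R n M i := by
  simp only [kt, LinearMap.mem_ker, LinearMap.lsmul_apply] at hx ⊢
  rw [smul_smul, ← pow_succ]
  exact hx

/-- `μ_i : G_i(M) → G_{i+1}(M)`, induced by multiplication by `t`. -/
def muMap (i : ℕ) : Gi R n M i →ₗ[Rn R n] Gi R n M (i + 1) :=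
  Submodule.mapQ _ _
    (LinearMap.restrict (LinearMap.lsmul (Rn R n) M (tn R n))
      (fun _ hx => tMi_succ_mem R n M hx))
    (fun x hx => by
      simp only [Submodule.mem_comap] at hx ⊢
      exact tMi_succ_mem R n M hx)

/-- `λ_{i+1} : G^{(i+2)}(M) → G^{(i+1)}(M)`, induced by multiplication by `t`
(with the shifted indexing, `lamMap R n M i : Gup (i+1) → Gup i`). -/
def lamMap (i : ℕ) : Gup R n M (i + 1) →ₗ[Rn R n] Gup R n M i :=
  Submodule.mapQ _ _
    (LinearMap.restrict (LinearMap.lsmul (Rn R n) M (tn R n))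
      (fun _ hx => kt_pred_mem R n M hx))
    (fun x hx => by
      simp only [Submodule.mem_comap] at hx ⊢
      exact kt_pred_mem R n M hx)

/-- The composition `μ_{k-1} ∘ ... ∘ μ_0 : G_0(M) → G_k(M)`. -/
def muComp : (k : ℕ) → (Gi R n M 0 →ₗ[Rn R n] Gi R n M k)
  | 0 => LinearMap.id
  | (k + 1) => (muMap R n M k).comp (muComp k)

/-- The composition `λ_1 ∘ ... ∘ λ_k : G^{(k+1)}(M) → G^{(1)}(M)`. -/
def lamComp : (k : ℕ) → (Gup R n M k →ₗ[Rn R n] Gup R n M 0)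
  | 0 => LinearMap.id
  | (k + 1) => (lamComp k).comp (lamMap R n M k)

end Modules

/-!
Localizing `R[n]` at its non-zero-divisors gives `K[n] = K[t]/(t^n)` with `K = Frac R`, so an
element `m ∉ T(M)` stays nonzero in the localized module `M_S`. The ring `K[n]` is self-injective
(its ideals are the `(t^k)`) and every non-unit of it kills `t^(n-1) ≠ 0`, so `m ↦ t^(n-1)`
extends to a `K[n]`-linear form on `M_S`. Composing with `M → M_S` and clearing the finitely many
denominators on generators of `M` gives `φ ∈ M^∨` with `φ m ≠ 0`.
-/

theorem Submodule.torsion_le_ker_dual_eval (A M : Type*) [CommRing A] [AddCommGroup M]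
    [Module A M] : Submodule.torsion A M ≤ LinearMap.ker (Module.Dual.eval A M) := by
  intro m hm
  obtain ⟨s, hs⟩ := (Submodule.mem_torsion_iff m).mp hm
  ext φ
  have hφ : (s : A) * φ m = 0 := by
    rw [← smul_eq_mul, ← map_smul, show (s : A) • m = 0 from hs, map_zero]
  simpa using (mem_nonZeroDivisors_iff.mp s.2).1 _ hφ

theorem Module.Baer.exists_dual_apply_eq {B N : Type*} [CommRing B] [AddCommGroup N]
    [Module B N] (hB : Module.Baer B B) {s : B} (hsoc : ∀ a : B, ¬IsUnit a → a * s = 0)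
    {x : N} (hx : x ≠ 0) : ∃ ψ : Module.Dual B N, ψ x = s := by
  let I := LinearMap.ker (LinearMap.toSpanSingleton B N x)
  have hI : I ≤ LinearMap.ker (LinearMap.toSpanSingleton B B s) := fun a ha => by
    rw [LinearMap.mem_ker, LinearMap.toSpanSingleton_apply] at ha ⊢
    exact hsoc a fun hu => hx ((hu.smul_eq_zero).mp ha)
  obtain ⟨ψ, hψ⟩ := hB.extension_property (I.liftQ _ le_rfl)
    (LinearMap.ker_eq_bot.mp (I.ker_liftQ_eq_bot _ _ le_rfl)) (I.liftQ _ hI)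
  refine ⟨ψ, ?_⟩
  have h1 := LinearMap.congr_fun hψ (I.mkQ 1)
  rwa [LinearMap.comp_apply, Submodule.mkQ_apply, Submodule.liftQ_apply, Submodule.liftQ_apply,
    LinearMap.toSpanSingleton_apply, LinearMap.toSpanSingleton_apply, one_smul, one_smul] at h1

theorem exists_dual_apply_ne_zero_of_isLocalization {A B M : Type*} [CommRing A] [CommRing B]
    [Algebra A B] {S : Submonoid A} (hS : S ≤ nonZeroDivisors A) [IsLocalization S B]
    [AddCommGroup M] [Module A M] [Module.Finite A M] (f : M →ₗ[A] B) {m : M} (hm : f m ≠ 0) :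
    ∃ φ : Module.Dual A M, φ m ≠ 0 := by
  obtain ⟨T, hT⟩ := Module.Finite.fg_top (R := A) (M := M)
  obtain ⟨b, hb⟩ := IsLocalization.exist_integer_multiples S T f
  let j := Algebra.linearMap A B
  have hj : Function.Injective j := IsLocalization.injective B hS
  have hrange : LinearMap.range ((b : A) • f) ≤ LinearMap.range j := by
    rw [LinearMap.range_eq_map, ← hT, Submodule.map_span, Submodule.span_le]
    rintro _ ⟨g, hg, rfl⟩
    exact hb g hg
  let φ := (LinearEquiv.ofInjective j hj).symm.toLinearMap ∘ₗ
    Submodule.inclusion hrange ∘ₗ ((b : A) • f).rangeRestrict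
  refine ⟨φ, fun h => hm ?_⟩
  have hφ : j (φ m) = (b : A) • f m :=
    congrArg Subtype.val ((LinearEquiv.ofInjective j hj).apply_symm_apply _)
  rwa [h, map_zero, eq_comm, Algebra.smul_def, (IsLocalization.map_units B b).mul_right_eq_zero]
    at hφ

namespace Rn

section CommRing

variable {R : Type*} [CommRing R] {n : ℕ}

theorem mk_eq_zero_iff {p : R[X]} : (Ideal.Quotient.mk _ p : Rn R n) = 0 ↔ X ^ n ∣ p := by
  rw [Ideal.Quotient.eq_zero_iff_mem, Ideal.mem_span_singleton]

theorem tn_pow (k : ℕ) : tn R n ^ k = Ideal.Quotient.mk _ (X ^ k) :=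
  (map_pow _ _ _).symm

theorem tn_pow_self : tn R n ^ n = 0 := by
  rw [tn_pow, mk_eq_zero_iff]

theorem tn_pow_ne_zero [Nontrivial R] {k : ℕ} (hk : k < n) : tn R n ^ k ≠ 0 := by
  rw [tn_pow, Ne, mk_eq_zero_iff, X_pow_dvd_iff]
  exact fun h => by simpa using h k hk

theorem mk_mul_tn_pow_pred_eq_zero (hn : 0 < n) {p : R[X]} (hp : p.coeff 0 = 0) :
    (Ideal.Quotient.mk _ p : Rn R n) * tn R n ^ (n - 1) = 0 := by
  obtain ⟨q, rfl⟩ := X_dvd_iff.mpr hp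
  rw [tn_pow, ← map_mul, mk_eq_zero_iff, mul_right_comm, ← pow_succ', Nat.sub_add_cancel hn]
  exact dvd_mul_right _ _

theorem mk_mem_nonZeroDivisors_iff [IsDomain R] (hn : 0 < n) {p : R[X]} :
    (Ideal.Quotient.mk _ p : Rn R n) ∈ nonZeroDivisors (Rn R n) ↔ p.coeff 0 ≠ 0 := by
  refine ⟨fun hp h0 => tn_pow_ne_zero (R := R) (Nat.sub_lt hn one_pos)
    (hp.1 _ (mk_mul_tn_pow_pred_eq_zero hn h0)), fun hp => ?_⟩
  rw [mem_nonZeroDivisors_iff_right]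
  intro x hx
  obtain ⟨q, rfl⟩ := Ideal.Quotient.mk_surjective x
  rw [← map_mul, mk_eq_zero_iff] at hx
  rw [mk_eq_zero_iff]
  exact prime_X.pow_dvd_of_dvd_mul_right n (mt X_dvd_iff.mp hp) hx

theorem mem_span_tn_pow_of_tn_pow_mul_eq_zero [IsDomain R] {k : ℕ} (hk : k ≤ n) {b : Rn R n}
    (h : tn R n ^ (n - k) * b = 0) : b ∈ Ideal.span {tn R n ^ k} := by
  obtain ⟨p, rfl⟩ := Ideal.Quotient.mk_surjective b
  rw [tn_pow, ← map_mul, mk_eq_zero_iff] at h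
  obtain ⟨q, rfl⟩ : X ^ k ∣ p := by
    rwa [← mul_dvd_mul_iff_left (pow_ne_zero (n - k) X_ne_zero), ← pow_add,
      Nat.sub_add_cancel hk]
  rw [map_mul, ← tn_pow]
  exact Ideal.mul_mem_right _ _ (Ideal.mem_span_singleton_self _)

end CommRing

section Field

variable {K : Type*} [Field K] {n : ℕ}

theorem isUnit_mk_of_coeff_zero_ne_zero {p : K[X]} (hp : p.coeff 0 ≠ 0) :
    IsUnit (Ideal.Quotient.mk _ p : Rn K n) := by
  have hnil : IsNilpotent (tn K n * Ideal.Quotient.mk _ p.divX) :=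
    ⟨n, by rw [mul_pow, tn_pow_self, zero_mul]⟩
  have hconst : IsUnit (Ideal.Quotient.mk _ (C (p.coeff 0)) : Rn K n) :=
    ((isUnit_iff_ne_zero.mpr hp).map C).map _
  convert hnil.isUnit_add_left_of_commute hconst (Commute.all _ _)
  rw [tn, ← map_mul, ← map_add, add_comm, X_mul_divX_add]

theorem mul_tn_pow_pred_eq_zero_of_not_isUnit (hn : 0 < n) {b : Rn K n} (hb : ¬IsUnit b) :
    b * tn K n ^ (n - 1) = 0 := by
  obtain ⟨p, rfl⟩ := Ideal.Quotient.mk_surjective b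
  exact mk_mul_tn_pow_pred_eq_zero hn (not_not.mp (mt isUnit_mk_of_coeff_zero_ne_zero hb))

theorem exists_eq_span_tn_pow (I : Ideal (Rn K n)) : ∃ k ≤ n, I = Ideal.span {tn K n ^ k} := by
  obtain ⟨g, hg⟩ := Submodule.IsPrincipal.principal (I.comap (Ideal.Quotient.mk _))
  have hXn : g ∣ X ^ n := by
    rw [← Ideal.mem_span_singleton, ← Ideal.submodule_span_eq, ← hg, Ideal.mem_comap,
      Ideal.Quotient.eq_zero_iff_mem.mpr (Ideal.mem_span_singleton_self _)]
    exact I.zero_mem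
  obtain ⟨k, hk, hgk⟩ := (dvd_prime_pow prime_X n).mp hXn
  refine ⟨k, hk, ?_⟩
  rw [← Ideal.map_comap_of_surjective _ Ideal.Quotient.mk_surjective I, hg,
    Ideal.submodule_span_eq, Ideal.span_singleton_eq_span_singleton.mpr hgk, Ideal.map_span,
    Set.image_singleton, tn_pow]

theorem baer : Module.Baer (Rn K n) (Rn K n) := by
  intro I g
  obtain ⟨k, hk, rfl⟩ := exists_eq_span_tn_pow I
  let gen : Ideal.span {tn K n ^ k} := ⟨_, Ideal.mem_span_singleton_self _⟩
  have hann : tn K n ^ (n - k) * g gen = 0 := by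
    rw [← smul_eq_mul, ← map_smul]
    convert g.map_zero
    ext
    rw [Submodule.coe_smul, smul_eq_mul, ← pow_add, Nat.sub_add_cancel hk, tn_pow_self,
      Submodule.coe_zero]
  obtain ⟨b, hb⟩ := Ideal.mem_span_singleton.mp (mem_span_tn_pow_of_tn_pow_mul_eq_zero hk hann)
  refine ⟨LinearMap.toSpanSingleton _ _ b, fun x hx => ?_⟩
  obtain ⟨c, rfl⟩ := Ideal.mem_span_singleton'.mp hx
  have hx_eq : (⟨c * tn K n ^ k, hx⟩ : Ideal.span {tn K n ^ k}) = c • gen := rfl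
  rw [hx_eq, map_smul, hb, LinearMap.toSpanSingleton_apply, smul_eq_mul, smul_eq_mul, mul_assoc]

end Field

section Localization

variable {R S : Type*} [CommRing R] [CommRing S]

def map (f : R →+* S) (n : ℕ) : Rn R n →+* Rn S n :=
  Ideal.quotientMap _ (mapRingHom f) <| Ideal.span_le.mpr <| by simp

@[simp]
theorem map_mk (f : R →+* S) {n : ℕ} (p : R[X]) :
    map f n (Ideal.Quotient.mk _ p) = Ideal.Quotient.mk _ (p.map f) :=
  Ideal.quotientMap_mk

theorem map_injective {f : R →+* S} (hf : Function.Injective f) (n : ℕ) :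
    Function.Injective (map f n) := by
  refine Ideal.quotientMap_injective' fun p hp => ?_
  rw [Ideal.mem_comap, coe_mapRingHom, Ideal.mem_span_singleton, X_pow_dvd_iff] at hp
  rw [Ideal.mem_span_singleton, X_pow_dvd_iff]
  exact fun d hd => hf (by simpa using hp d hd)

instance (R : Type*) [CommRing R] [IsDomain R] (n : ℕ) :
    Algebra (Rn R n) (Rn (FractionRing R) n) :=
  (map (algebraMap R (FractionRing R)) n).toAlgebra

theorem isLocalization [IsDomain R] {n : ℕ} (hn : 0 < n) :
    IsLocalization (nonZeroDivisors (Rn R n)) (Rn (FractionRing R) n) := by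
  have hinj := IsFractionRing.injective R (FractionRing R)
  refine (isLocalization_iff _ _).mpr
    ⟨?_, fun z => ?_, fun h => ⟨1, by rw [map_injective hinj n h]⟩⟩
  · rintro ⟨s, hs⟩
    obtain ⟨p, rfl⟩ := Ideal.Quotient.mk_surjective s
    rw [mk_mem_nonZeroDivisors_iff hn] at hs
    change IsUnit (map _ n _)
    rw [map_mk]
    refine isUnit_mk_of_coeff_zero_ne_zero ?_
    rwa [coeff_map, Ne, map_eq_zero_iff _ hinj]
  · obtain ⟨q, rfl⟩ := Ideal.Quotient.mk_surjective z
    obtain ⟨b, hb, hspec⟩ := IsLocalization.integerNormalization_spec (nonZeroDivisors R) q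
    have hb' : (Ideal.Quotient.mk _ (C b) : Rn R n) ∈ nonZeroDivisors (Rn R n) := by
      rw [mk_mem_nonZeroDivisors_iff hn, coeff_C_zero]
      exact nonZeroDivisors.ne_zero hb
    refine ⟨⟨Ideal.Quotient.mk _ (IsLocalization.integerNormalization (nonZeroDivisors R) q),
      ⟨_, hb'⟩⟩, ?_⟩
    change _ * map _ n _ = map _ n _
    rw [map_mk, map_mk, hspec, map_C, ← map_mul, mul_comm, ← smul_eq_C_mul, algebraMap_smul]

end Localization

end Rn

set_option synthInstance.maxHeartbeats 1000000 in
set_option maxHeartbeats 1000000 in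
theorem ker_eval_eq_torsion_general
    {R : Type*} [CommRing R] [IsDomain R]
    (n : ℕ) (hn : 0 < n)
    (M : Type*) [AddCommGroup M] [Module (Rn R n) M] [Module.Finite (Rn R n) M] :
    LinearMap.ker (Module.Dual.eval (Rn R n) M) = Submodule.torsion (Rn R n) M := by
  refine le_antisymm (fun m hm => ?_) (Submodule.torsion_le_ker_dual_eval _ _)
  have := Rn.isLocalization (R := R) hn
  let : Module (Rn (FractionRing R) n) (LocalizedModule (nonZeroDivisors (Rn R n)) M) :=
    LocalizedModule.moduleOfIsLocalization
  by_contra hmt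
  have hx : LocalizedModule.mkLinearMap (nonZeroDivisors (Rn R n)) M m ≠ 0 := by
    rwa [Ne, IsLocalizedModule.eq_zero_iff (nonZeroDivisors (Rn R n)),
      ← Submodule.mem_torsion_iff]
  obtain ⟨ψ, hψ⟩ := (Rn.baer (K := FractionRing R) (n := n)).exists_dual_apply_eq
    (fun _ => Rn.mul_tn_pow_pred_eq_zero_of_not_isUnit hn) hx
  obtain ⟨φ, hφ⟩ := exists_dual_apply_ne_zero_of_isLocalization le_rfl
    ((ψ.restrictScalars (Rn R n)) ∘ₗ LocalizedModule.mkLinearMap _ M)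
    (show ψ _ ≠ 0 from hψ ▸ Rn.tn_pow_ne_zero (Nat.sub_lt hn one_pos))
  exact hφ (LinearMap.congr_fun hm φ)

set_option synthInstance.maxHeartbeats 1000000 in
set_option maxHeartbeats 1000000 in
/-- The kernel of the canonical map `t_M : M → M^{∨∨}` of a finitely generated
`R[n]`-module `M` into its double dual is the torsion submodule of `M`. -/
theorem ker_eval_eq_torsion
    {R : Type*} [CommRing R] [IsDomain R] [IsNoetherianRing R]
    (n : ℕ) (hn : 0 < n)
    (M : Type*) [AddCommGroup M] [Module (Rn R n) M] [Module.Finite (Rn R n) M] :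
    LinearMap.ker (Module.Dual.eval (Rn R n) M) = Submodule.torsion (Rn R n) M :=
  ker_eval_eq_torsion_general n hn M
end
end

section
/- Let R be a commutative Noetherian integral domain, n ≥ 2 an integer, and M a finitely generated R[n]-module. The following are equivalent: (i) the composition 𝛌(M) = λ_1 ∘ ... ∘ λ_{n-1} : G^{(n)}(M) → G^{(1)}(M) is surjective; (ii) λ_1, ..., λ_{n-1} are all surjective; (iii) μ_0, ..., μ_{n-2} are all injective; (iv) the composition 𝛍(M) = μ_{n-2} ∘ ... ∘ μ_0 : G_0(M) → G_{n-1}(M) is injective. Moreover, if these conditions hold, then all the maps λ_1, ..., λ_{n-1}, μ_0, ..., μ_{n-2}, 𝛌(M) and 𝛍(M) are isomorphisms. -/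
open Polynomial

noncomputable section

/-! Multiplication by `t` makes every `λ_i` injective and every `μ_i` surjective, so the composite
`𝛌(M)` is surjective iff each `λ_i` is, and `𝛍(M)` is injective iff each `μ_i` is. As `t^n = 0`,
surjectivity of `𝛌(M)` says `ker t ⊆ im t^{n-1}` and injectivity of `𝛍(M)` says
`ker t^{n-1} ⊆ im t`. These two inclusions are equivalent for every endomorphism `f` in place of `t`
and every exponent `N` in place of `n - 1`: both are propagated along `ker f^j` and `im f^j` by
induction on `j ≤ N`. -/

namespace Module.End

variable {R M : Type*} [Ring R] [AddCommGroup M] [Module R M] {f : Module.End R M} {N : ℕ}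

open LinearMap

lemma ker_pow_le_ker_pow {a b : ℕ} (h : a ≤ b) : ker (f ^ a) ≤ ker (f ^ b) :=
  (iterateKer f).monotone h

lemma range_pow_le_range_pow {a b : ℕ} (h : a ≤ b) : range (f ^ b) ≤ range (f ^ a) :=
  (iterateRange f).monotone h

lemma ker_pow_le_range_of_ker_le_range_pow (h : ker f ≤ range (f ^ N)) :
    ker (f ^ N) ≤ range f := by
  suffices ∀ j ≤ N, ker (f ^ j) ≤ range f from this N le_rfl
  intro j
  induction j with
  | zero => simp [one_eq_id]
  | succ j ih =>
    intro hj x hx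
    obtain ⟨w, hw⟩ : (f ^ j) x ∈ range (f ^ N) := h (by
      rw [mem_ker, ← mul_apply, ← pow_succ']; exact hx)
    have hdiff : x - (f ^ (N - j)) w ∈ ker (f ^ j) := by
      rw [mem_ker, map_sub, ← mul_apply, ← pow_add, Nat.add_sub_cancel' (by omega), hw, sub_self]
    have hw_mem : (f ^ (N - j)) w ∈ range f := by
      simpa using range_pow_le_range_pow (f := f) (a := 1) (by omega) (mem_range_self _ w)
    simpa using add_mem (ih (by omega) hdiff) hw_mem

lemma ker_le_range_pow_of_ker_pow_le_range (h : ker (f ^ N) ≤ range f) :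
    ker f ≤ range (f ^ N) := by
  suffices ∀ j ≤ N, ker f ≤ range (f ^ j) from this N le_rfl
  intro j
  induction j with
  | zero => simp [one_eq_id]
  | succ j ih =>
    intro hj x hx
    obtain ⟨y, rfl⟩ := ih (by omega) hx
    have hy : y ∈ ker (f ^ (j + 1)) := by
      rwa [mem_ker, pow_succ', mul_apply]
    obtain ⟨z, rfl⟩ := h (ker_pow_le_ker_pow hj hy)
    exact ⟨z, by rw [pow_succ, mul_apply]⟩

lemma ker_le_range_pow_iff : ker f ≤ range (f ^ N) ↔ ker (f ^ N) ≤ range f :=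
  ⟨ker_pow_le_range_of_ker_le_range_pow, ker_le_range_pow_of_ker_pow_le_range⟩

end Module.End

section Filtrations

variable {R : Type*} [CommRing R] {n : ℕ} {M : Type*} [AddCommGroup M] [Module (Rn R n) M]

open LinearMap Submodule

variable (R n) in
lemma tn_pow_self : tn R n ^ n = 0 :=
  Ideal.Quotient.eq_zero_iff_mem.mpr (Ideal.mem_span_singleton_self _)

lemma lsmul_tn_pow (i : ℕ) :
    lsmul (Rn R n) M (tn R n ^ i) = lsmul (Rn R n) M (tn R n) ^ i :=
  map_pow (Module.toModuleEnd (Rn R n) M) (tn R n) i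

lemma tMi_eq_range_pow (i : ℕ) :
    tMi R n M i = range (lsmul (Rn R n) M (tn R n) ^ i) := by
  rw [tMi, lsmul_tn_pow]

lemma kt_eq_ker_pow (i : ℕ) :
    kt R n M i = ker (lsmul (Rn R n) M (tn R n) ^ i) := by
  rw [kt, lsmul_tn_pow]

lemma tMi_self : tMi R n M n = ⊥ := by
  rw [tMi, tn_pow_self, map_zero, range_zero]

lemma kt_self : kt R n M n = ⊤ := by
  rw [kt, tn_pow_self, map_zero, ker_zero]

lemma kt_zero : kt R n M 0 = ⊥ := by
  rw [kt_eq_ker_pow, pow_zero, Module.End.one_eq_id, ker_id]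

lemma kt_one_le_tMi_iff (N : ℕ) : kt R n M 1 ≤ tMi R n M N ↔ kt R n M N ≤ tMi R n M 1 := by
  simpa only [kt_eq_ker_pow, tMi_eq_range_pow, pow_one] using Module.End.ker_le_range_pow_iff

end Filtrations

section GradedMaps

variable {R : Type*} [CommRing R] {n : ℕ} {M : Type*} [AddCommGroup M] [Module (Rn R n) M]

open Function LinearMap Submodule

lemma smul_mem_kt_iff {i : ℕ} {x : M} : tn R n • x ∈ kt R n M i ↔ x ∈ kt R n M (i + 1) := by
  simp only [kt, mem_ker, lsmul_apply, smul_smul, pow_succ]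

lemma pow_smul_mem_kt_one {k : ℕ} {x : M} (hx : x ∈ kt R n M (k + 1)) :
    tn R n ^ k • x ∈ kt R n M 1 := by
  simpa only [kt, mem_ker, lsmul_apply, smul_smul, pow_one, ← pow_succ'] using hx

lemma pow_smul_mem_tMi (k : ℕ) (x : M) : tn R n ^ k • x ∈ tMi R n M k :=
  mem_range_self _ x

lemma lamMap_mk (i : ℕ) (x : M) (hx : x ∈ kt R n M (i + 1 + 1)) :
    lamMap R n M i (Submodule.Quotient.mk ⟨x, hx⟩) =
      Submodule.Quotient.mk ⟨tn R n • x, smul_mem_kt_iff.mpr hx⟩ :=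
  rfl

lemma muMap_mk (i : ℕ) (x : M) (hx : x ∈ tMi R n M i) :
    muMap R n M i (Submodule.Quotient.mk ⟨x, hx⟩) =
      Submodule.Quotient.mk ⟨tn R n • x, tMi_succ_mem R n M hx⟩ :=
  rfl

lemma lamComp_mk (k : ℕ) (x : M) (hx : x ∈ kt R n M (k + 1)) :
    lamComp R n M k (Submodule.Quotient.mk ⟨x, hx⟩) =
      Submodule.Quotient.mk ⟨tn R n ^ k • x, pow_smul_mem_kt_one hx⟩ := by
  induction k generalizing x with
  | zero => simp only [lamComp, pow_zero, one_smul, id_apply]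
  | succ k ih =>
    rw [lamComp, LinearMap.comp_apply, lamMap_mk, ih]
    simp only [smul_smul, ← pow_succ]

lemma muComp_mk (k : ℕ) (x : M) (hx : x ∈ tMi R n M 0) :
    muComp R n M k (Submodule.Quotient.mk ⟨x, hx⟩) =
      Submodule.Quotient.mk ⟨tn R n ^ k • x, pow_smul_mem_tMi k x⟩ := by
  induction k with
  | zero => simp only [muComp, pow_zero, one_smul, id_apply]
  | succ k ih =>
    rw [muComp, LinearMap.comp_apply, ih, muMap_mk]
    simp only [smul_smul, ← pow_succ']

lemma lamMap_injective (i : ℕ) : Injective (lamMap R n M i) := by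
  refine (injective_iff_map_eq_zero _).mpr fun a ha => ?_
  obtain ⟨⟨x, hx⟩, rfl⟩ := Submodule.Quotient.mk_surjective _ a
  rw [lamMap_mk, Submodule.Quotient.mk_eq_zero, mem_comap, subtype_apply, smul_mem_kt_iff] at ha
  exact (Submodule.Quotient.mk_eq_zero _).mpr ha

lemma muMap_surjective (i : ℕ) : Surjective (muMap R n M i) := by
  intro g
  obtain ⟨⟨_, x, rfl⟩, rfl⟩ := Submodule.Quotient.mk_surjective _ g
  refine ⟨Submodule.Quotient.mk ⟨tn R n ^ i • x, pow_smul_mem_tMi i x⟩, ?_⟩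
  rw [muMap_mk]
  simp only [lsmul_apply, smul_smul, ← pow_succ']

lemma lamComp_injective (k : ℕ) : Injective (lamComp R n M k) := by
  induction k with
  | zero => exact injective_id
  | succ k ih =>
    rw [lamComp, coe_comp]
    exact ih.comp (lamMap_injective k)

lemma muComp_surjective (k : ℕ) : Surjective (muComp R n M k) := by
  induction k with
  | zero => exact surjective_id
  | succ k ih =>
    rw [muComp, coe_comp]
    exact (muMap_surjective k).comp ih

lemma surjective_lamComp_iff_forall (k : ℕ) :
    Surjective (lamComp R n M k) ↔ ∀ i < k, Surjective (lamMap R n M i) := by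
  induction k with
  | zero => simpa [lamComp] using surjective_id
  | succ k ih =>
    rw [Nat.forall_lt_succ_right, ← ih, lamComp, coe_comp]
    exact ⟨fun h => ⟨h.of_comp, h.of_comp_left (lamComp_injective k)⟩, fun h => h.1.comp h.2⟩

lemma injective_muComp_iff_forall (k : ℕ) :
    Injective (muComp R n M k) ↔ ∀ i < k, Injective (muMap R n M i) := by
  induction k with
  | zero => simpa [muComp] using injective_id
  | succ k ih =>
    rw [Nat.forall_lt_succ_right, ← ih, muComp, coe_comp]
    exact ⟨fun h => ⟨h.of_comp, h.of_comp_right (muComp_surjective k)⟩, fun h => h.2.comp h.1⟩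

lemma surjective_lamComp_iff (k : ℕ) :
    Surjective (lamComp R n M k) ↔
      kt R n M 1 ≤ (kt R n M (k + 1)).map (lsmul (Rn R n) M (tn R n ^ k)) := by
  constructor
  · intro h x hx
    obtain ⟨g, hg⟩ := h (Submodule.Quotient.mk ⟨x, hx⟩)
    obtain ⟨⟨y, hy⟩, rfl⟩ := Submodule.Quotient.mk_surjective _ g
    rw [lamComp_mk, Submodule.Quotient.eq, mem_comap, kt_zero, mem_bot, subtype_apply,
      AddSubgroupClass.coe_sub, sub_eq_zero] at hg
    exact ⟨y, hy, hg⟩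
  · intro h g
    obtain ⟨⟨x, hx⟩, rfl⟩ := Submodule.Quotient.mk_surjective _ g
    obtain ⟨y, hy, rfl⟩ := h hx
    exact ⟨Submodule.Quotient.mk ⟨y, hy⟩, lamComp_mk k y hy⟩

lemma injective_muComp_iff (k : ℕ) :
    Injective (muComp R n M k) ↔
      (tMi R n M (k + 1)).comap (lsmul (Rn R n) M (tn R n ^ k)) ≤ tMi R n M 1 := by
  have hker (x : M) (hx : x ∈ tMi R n M 0) :
      muComp R n M k (Submodule.Quotient.mk ⟨x, hx⟩) = 0 ↔
        tn R n ^ k • x ∈ tMi R n M (k + 1) := by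
    rw [muComp_mk, Submodule.Quotient.mk_eq_zero, mem_comap, subtype_apply]
  have htop (x : M) : x ∈ tMi R n M 0 := by
    simpa only [pow_zero, one_smul] using pow_smul_mem_tMi 0 x
  rw [injective_iff_map_eq_zero]
  constructor
  · intro h x hx
    have := h _ ((hker x (htop x)).mpr hx)
    rwa [Submodule.Quotient.mk_eq_zero, mem_comap, subtype_apply] at this
  · intro h g hg
    obtain ⟨⟨x, hx⟩, rfl⟩ := Submodule.Quotient.mk_surjective _ g
    rw [Submodule.Quotient.mk_eq_zero, mem_comap, subtype_apply]
    exact h ((hker x hx).mp hg)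

end GradedMaps

section Balanced

variable {R : Type*} [CommRing R] {M : Type*} {N : ℕ} [AddCommGroup M] [Module (Rn R (N + 1)) M]

open Function Submodule

lemma surjective_lamComp_iff_kt_one_le :
    Surjective (lamComp R (N + 1) M N) ↔ kt R (N + 1) M 1 ≤ tMi R (N + 1) M N := by
  rw [surjective_lamComp_iff, kt_self, Submodule.map_top]
  rfl

lemma injective_muComp_iff_kt_le :
    Injective (muComp R (N + 1) M N) ↔ kt R (N + 1) M N ≤ tMi R (N + 1) M 1 := by
  rw [injective_muComp_iff, tMi_self, comap_bot]
  rfl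

lemma surjective_lamComp_iff_injective_muComp :
    Surjective (lamComp R (N + 1) M N) ↔ Injective (muComp R (N + 1) M N) := by
  rw [surjective_lamComp_iff_kt_one_le, injective_muComp_iff_kt_le, kt_one_le_tMi_iff]

end Balanced

theorem balanced_equivalences_general
    {R : Type*} [CommRing R]
    (n : ℕ) (hn : 2 ≤ n)
    (M : Type*) [AddCommGroup M] [Module (Rn R n) M] :
    (Function.Surjective (lamComp R n M (n - 1)) ↔
        ∀ i : ℕ, i ≤ n - 2 → Function.Surjective (lamMap R n M i)) ∧
    (Function.Surjective (lamComp R n M (n - 1)) ↔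
        ∀ i : ℕ, i ≤ n - 2 → Function.Injective (muMap R n M i)) ∧
    (Function.Surjective (lamComp R n M (n - 1)) ↔
        Function.Injective (muComp R n M (n - 1))) ∧
    (Function.Surjective (lamComp R n M (n - 1)) →
        (∀ i : ℕ, i ≤ n - 2 → Function.Bijective (lamMap R n M i)) ∧
        (∀ i : ℕ, i ≤ n - 2 → Function.Bijective (muMap R n M i)) ∧
        Function.Bijective (lamComp R n M (n - 1)) ∧
        Function.Bijective (muComp R n M (n - 1))) := by
  obtain ⟨m, rfl⟩ : ∃ m, n = m + 2 := ⟨n - 2, by omega⟩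
  have hlam : Function.Surjective (lamComp R (m + 2) M (m + 1)) ↔
      ∀ i ≤ m, Function.Surjective (lamMap R (m + 2) M i) := by
    simp only [surjective_lamComp_iff_forall, Nat.lt_succ_iff]
  have hmu : Function.Injective (muComp R (m + 2) M (m + 1)) ↔
      ∀ i ≤ m, Function.Injective (muMap R (m + 2) M i) := by
    simp only [injective_muComp_iff_forall, Nat.lt_succ_iff]
  have hbal := surjective_lamComp_iff_injective_muComp (R := R) (M := M) (N := m + 1)
  refine ⟨hlam, hbal.trans hmu, hbal, fun h => ⟨?_, ?_, ⟨lamComp_injective _, h⟩,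
    ⟨hbal.mp h, muComp_surjective _⟩⟩⟩
  · exact fun i hi => ⟨lamMap_injective i, hlam.mp h i hi⟩
  · exact fun i hi => ⟨hmu.mp (hbal.mp h) i hi, muMap_surjective i⟩

/-- For a finitely generated `R[n]`-module `M` (`n ≥ 2`), the following are equivalent:
(i) `𝛌(M) = λ_1 ∘ ... ∘ λ_{n-1} : G^{(n)}(M) → G^{(1)}(M)` is surjective;
(ii) all the `λ_1, ..., λ_{n-1}` are surjective;
(iii) all the `μ_0, ..., μ_{n-2}` are injective;
(iv) `𝛍(M) = μ_{n-2} ∘ ... ∘ μ_0 : G_0(M) → G_{n-1}(M)` is injective.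
Moreover, if these conditions hold, all these maps are isomorphisms.
(Here `lamMap R n M i` is `λ_{i+1}`, `lamComp R n M (n-1)` is `𝛌(M)` and
`muComp R n M (n-1)` is `𝛍(M)`.) -/
theorem balanced_equivalences
    {R : Type*} [CommRing R] [IsDomain R] [IsNoetherianRing R]
    (n : ℕ) (hn : 2 ≤ n)
    (M : Type*) [AddCommGroup M] [Module (Rn R n) M] [Module.Finite (Rn R n) M] :
    (Function.Surjective (lamComp R n M (n - 1)) ↔
        ∀ i : ℕ, i ≤ n - 2 → Function.Surjective (lamMap R n M i)) ∧
    (Function.Surjective (lamComp R n M (n - 1)) ↔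
        ∀ i : ℕ, i ≤ n - 2 → Function.Injective (muMap R n M i)) ∧
    (Function.Surjective (lamComp R n M (n - 1)) ↔
        Function.Injective (muComp R n M (n - 1))) ∧
    (Function.Surjective (lamComp R n M (n - 1)) →
        (∀ i : ℕ, i ≤ n - 2 → Function.Bijective (lamMap R n M i)) ∧
        (∀ i : ℕ, i ≤ n - 2 → Function.Bijective (muMap R n M i)) ∧
        Function.Bijective (lamComp R n M (n - 1)) ∧
        Function.Bijective (muComp R n M (n - 1))) :=
  balanced_equivalences_general n hn M
end
end
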